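/- arXiv:math-ph/9903007 — 3 statements merged into one kernel-verified Lean document; each statement's English description precedes it below -/
import Mathlib

section
/- For real λ < 0 and γ > 3/2, ∫_0^∞ t^{γ - 5/2} ((t + λ)_-)^{3/2} dt = B(γ - 3/2, 5/2) · |λ|^γ, where (t+λ)_- = max(-(t+λ), 0). -/
/-!
Substituting `a = |λ| = -λ`, the integrand vanishes for `t ≥ a` and equals `t^{γ-5/2} (a - t)^{3/2}`
on `(0, a)`. The scaled Beta integral `∫_0^a t^{x-1} (a-t)^{y-1} dt = a^{x+y-1} B(x, y)` with
`x = γ - 3/2`, `y = 5/2` then gives `a^γ B(γ - 3/2, 5/2)`.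
-/

open MeasureTheory Set

noncomputable def betaF (x y : ℝ) : ℝ :=
  Real.Gamma x * Real.Gamma y / Real.Gamma (x + y)

theorem ofReal_betaF {x y : ℝ} (hx : 0 < x) (hy : 0 < y) :
    (betaF x y : ℂ) = Complex.betaIntegral x y := by
  have hΓ : Complex.Gamma ((x : ℂ) + y) ≠ 0 :=
    Complex.Gamma_ne_zero_of_re_pos (by simp only [Complex.add_re, Complex.ofReal_re]; linarith)
  rw [betaF, Complex.ofReal_div, Complex.ofReal_mul, ← Complex.Gamma_ofReal, ← Complex.Gamma_ofReal,
    ← Complex.Gamma_ofReal, Complex.ofReal_add, div_eq_iff hΓ,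
    Complex.Gamma_mul_Gamma_eq_betaIntegral (by simpa using hx) (by simpa using hy), mul_comm]

theorem intervalIntegral_rpow_mul_sub_rpow_eq_betaF {a x y : ℝ} (ha : 0 < a) (hx : 0 < x)
    (hy : 0 < y) :
    ∫ t in 0..a, t ^ (x - 1) * (a - t) ^ (y - 1) = a ^ (x + y - 1) * betaF x y := by
  apply Complex.ofReal_injective
  rw [← intervalIntegral.integral_ofReal, Complex.ofReal_mul, ofReal_betaF hx hy,
    Complex.ofReal_cpow ha.le]
  push_cast
  rw [← Complex.betaIntegral_scaled x y ha]
  refine intervalIntegral.integral_congr fun t ht => ?_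
  rw [uIcc_of_le ha.le] at ht
  simp only [Complex.ofReal_cpow ht.1, Complex.ofReal_cpow (sub_nonneg.2 ht.2)]
  push_cast
  rfl

theorem setIntegral_Ioi_rpow_mul_max_sub_rpow {a p q : ℝ} (ha : 0 ≤ a) (hq : q ≠ 0) :
    ∫ t in Ioi 0, t ^ p * max (a - t) 0 ^ q = ∫ t in 0..a, t ^ p * (a - t) ^ q := by
  have hvanish : ∀ t ∈ Ioi (0 : ℝ) \ Ioc 0 a, t ^ p * max (a - t) 0 ^ q = 0 := by
    rintro t ⟨ht0, hta⟩
    have : a < t := lt_of_not_ge fun h => hta ⟨ht0, h⟩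
    rw [max_eq_right (by linarith), Real.zero_rpow hq, mul_zero]
  rw [setIntegral_eq_of_subset_of_forall_sdiff_eq_zero measurableSet_Ioi Ioc_subset_Ioi_self hvanish,
    intervalIntegral.integral_of_le ha]
  exact setIntegral_congr_fun measurableSet_Ioc fun t ht => by
    rw [max_eq_left (sub_nonneg.2 ht.2)]

/-- For `λ < 0` and `γ > 3/2`,
`∫_0^∞ t^{γ-5/2} ((t+λ)_-)^{3/2} dt = B(γ-3/2,5/2) |λ|^γ`. -/
theorem stmt5 (l γ : ℝ) (hl : l < 0) (hγ : 3 / 2 < γ) :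
    ∫ t in Set.Ioi (0 : ℝ), t ^ (γ - 5 / 2) * (max (-(t + l)) 0) ^ ((3 : ℝ) / 2)
      = betaF (γ - 3 / 2) (5 / 2) * |l| ^ γ := by
  have hbeta := intervalIntegral_rpow_mul_sub_rpow_eq_betaF (neg_pos.2 hl)
    (sub_pos.2 hγ) (by norm_num : (0 : ℝ) < 5 / 2)
  simp_rw [← neg_sub_left, setIntegral_Ioi_rpow_mul_max_sub_rpow (neg_nonneg.2 hl.le)
    (by norm_num : (3 : ℝ) / 2 ≠ 0), abs_of_neg hl]
  rw [show γ - 3 / 2 - 1 = γ - 5 / 2 by ring, show (5 : ℝ) / 2 - 1 = 3 / 2 by norm_num,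
    show γ - 3 / 2 + 5 / 2 - 1 = γ by ring] at hbeta
  rw [hbeta, mul_comm]
end

section
/- Let V : ℝ → Mat_n(ℂ) be a smooth compactly supported Hermitian-matrix-valued potential, and let H(x,k) solve the Volterra integral equation H(x,k) = ∫_x^∞ K(x,t,k) dt + ∫_x^∞ K(x,t,k) H(t,k) dt with kernel K(x,t,k) = ((e^{2ik(t-x)} - 1)/(2ik)) V(t). Then there is a constant C (depending on V and n) such that ‖H(x,k)‖ ≤ C (1 + |k|)^{-1} for all x with min supp V ≤ x ≤ max supp V and all k with Im k ≥ 0, |k| ≥ 1. -/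
open Matrix MeasureTheory
open scoped Matrix.Norms.L2Operator

section Helpers
open MeasureTheory Set

lemma gronwall_aux (x0 x1 a b : ℝ) (ψ : ℝ → ℝ) (ha : 0 ≤ a) (hb : 0 ≤ b)
    (hint : IntegrableOn ψ (Set.Ioc x0 x1))
    (hnn : ∀ t ∈ Set.Ioc x0 x1, 0 ≤ ψ t)
    (hineq : ∀ t ∈ Set.Ioc x0 x1, ψ t ≤ a + b * ∫ u in Set.Ioc t x1, ψ u) :
    ∀ t ∈ Set.Ioc x0 x1, ψ t ≤ a * Real.exp (b * (x1 - x0)) := by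
  rcases hb.eq_or_lt with hb0 | hb0
  · intro t ht
    have h1 := hineq t ht
    rw [← hb0] at h1 ⊢
    simpa using h1.trans (by simp)
  set S := ∫ u in Set.Ioc x0 x1, ψ u with hSdef
  have hnn' : 0 ≤ᵐ[volume.restrict (Set.Ioc x0 x1)] ψ := by
    filter_upwards [ae_restrict_mem measurableSet_Ioc] with t ht using hnn t ht
  have hS : 0 ≤ S := setIntegral_nonneg measurableSet_Ioc hnn
  have hsub : ∀ t ∈ Set.Ioc x0 x1, (∫ u in Set.Ioc t x1, ψ u) ≤ S := by
    intro t ht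
    exact setIntegral_mono_set hint hnn' (HasSubset.Subset.eventuallyLE (Set.Ioc_subset_Ioc_left ht.1.le))
  set D := a + b * S with hDdef
  have hD : 0 ≤ D := by positivity
  have claim : ∀ m : ℕ, ∀ t ∈ Set.Ioc x0 x1,
      ψ t ≤ a * Real.exp (b * (x1 - t)) + D * (b * (x1 - t)) ^ m / m.factorial := by
    intro m
    induction m with
    | zero =>
      intro t ht
      have h1 : ψ t ≤ a + b * S := (hineq t ht).trans (by nlinarith [hsub t ht])
      have : (1:ℝ) ≤ Real.exp (b * (x1 - t)) := Real.one_le_exp (by nlinarith [ht.2, ht.1.le])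
      simp only [pow_zero, Nat.factorial_zero, Nat.cast_one, mul_one, div_one]
      nlinarith
    | succ m ih =>
      intro t ht
      have ht1 : t ≤ x1 := ht.2
      have hEint : ∫ w in Set.Ioc t x1, Real.exp (b * (x1 - w)) =
          (Real.exp (b * (x1 - t)) - 1) / b := by
        rw [← intervalIntegral.integral_of_le ht1]
        have := intervalIntegral.integral_comp_sub_left (fun y => Real.exp (b * y)) x1
          (a := t) (b := x1)
        rw [this]
        simp only [sub_self]
        rw [intervalIntegral.integral_comp_mul_left Real.exp (ne_of_gt hb0)]
        simp [integral_exp, mul_comm, smul_eq_mul, div_eq_inv_mul]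
      have hPint : ∫ w in Set.Ioc t x1, (x1 - w) ^ m = (x1 - t) ^ (m + 1) / (m + 1) := by
        rw [← intervalIntegral.integral_of_le ht1]
        have := intervalIntegral.integral_comp_sub_left (fun y => y ^ m) x1 (a := t) (b := x1)
        rw [this]
        simp only [sub_self]
        rw [integral_pow]
        simp
      have hcont1 : IntegrableOn (fun w => Real.exp (b * (x1 - w))) (Set.Ioc t x1) :=
        (Continuous.integrableOn_Ioc (by continuity))
      have hcont2 : IntegrableOn (fun w => (x1 - w) ^ m) (Set.Ioc t x1) :=
        (Continuous.integrableOn_Ioc (by continuity))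
      have hmono : (∫ u in Set.Ioc t x1, ψ u) ≤
          ∫ w in Set.Ioc t x1, (a * Real.exp (b * (x1 - w)) + (D * b ^ m / m.factorial) * (x1 - w) ^ m) := by
        apply setIntegral_mono_on (hint.mono_set (Set.Ioc_subset_Ioc_left ht.1.le))
          ((hcont1.const_mul a).add (hcont2.const_mul _)) measurableSet_Ioc
        intro w hw
        have hw' : w ∈ Set.Ioc x0 x1 := ⟨ht.1.trans hw.1, hw.2⟩
        have := ih w hw'
        calc ψ w ≤ a * Real.exp (b * (x1 - w)) + D * (b * (x1 - w)) ^ m / m.factorial := this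
          _ = a * Real.exp (b * (x1 - w)) + (D * b ^ m / m.factorial) * (x1 - w) ^ m := by
              rw [mul_pow]; ring
      rw [integral_add (hcont1.const_mul a) (hcont2.const_mul _), integral_const_mul,
        integral_const_mul, hEint, hPint] at hmono
      have h1 : ψ t ≤ a + b * (a * ((Real.exp (b * (x1 - t)) - 1) / b) +
          D * b ^ m / ↑m.factorial * ((x1 - t) ^ (m + 1) / (↑m + 1))) :=
        (hineq t ht).trans (by
          have := mul_le_mul_of_nonneg_left hmono hb
          linarith)
      have hfac : ((m + 1 : ℕ).factorial : ℝ) = (m + 1) * m.factorial := by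
        rw [Nat.factorial_succ]; push_cast; ring
      have hfacpos : (0:ℝ) < m.factorial := by positivity
      calc ψ t ≤ a + b * (a * ((Real.exp (b * (x1 - t)) - 1) / b) +
            D * b ^ m / ↑m.factorial * ((x1 - t) ^ (m + 1) / (↑m + 1))) := h1
        _ = a * Real.exp (b * (x1 - t)) + D * (b * (x1 - t)) ^ (m + 1) / ((m + 1 : ℕ).factorial) := by
            rw [hfac, mul_pow]
            field_simp
            ring
        _ ≤ _ := le_refl _
  -- pass to the limit
  intro t ht
  have hmb : ∀ m : ℕ, ψ t ≤ a * Real.exp (b * (x1 - x0)) + D * (b * (x1 - x0)) ^ m / m.factorial := by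
    intro m
    have h1 := claim m t ht
    have h2 : b * (x1 - t) ≤ b * (x1 - x0) :=
      mul_le_mul_of_nonneg_left (by linarith [ht.1]) hb
    have h3 : (0:ℝ) ≤ b * (x1 - t) := mul_nonneg hb (by linarith [ht.2])
    have h4 : Real.exp (b * (x1 - t)) ≤ Real.exp (b * (x1 - x0)) := Real.exp_le_exp.2 h2
    have h5 : (b * (x1 - t)) ^ m ≤ (b * (x1 - x0)) ^ m := pow_le_pow_left₀ h3 h2 m
    have hfacpos : (0:ℝ) < m.factorial := by positivity
    have e1 : a * Real.exp (b * (x1 - t)) ≤ a * Real.exp (b * (x1 - x0)) :=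
      mul_le_mul_of_nonneg_left h4 ha
    have e2 : D * (b * (x1 - t)) ^ m ≤ D * (b * (x1 - x0)) ^ m :=
      mul_le_mul_of_nonneg_left h5 hD
    have e3 : D * (b * (x1 - t)) ^ m / ↑m.factorial ≤ D * (b * (x1 - x0)) ^ m / ↑m.factorial :=
      (div_le_div_iff_of_pos_right hfacpos).mpr e2
    linarith [h1]
  have hlim : Filter.Tendsto (fun m : ℕ => a * Real.exp (b * (x1 - x0)) +
      D * (b * (x1 - x0)) ^ m / m.factorial) Filter.atTop
      (nhds (a * Real.exp (b * (x1 - x0)))) := by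
    have h0 : Filter.Tendsto (fun m : ℕ => (b * (x1 - x0)) ^ m / m.factorial) Filter.atTop
        (nhds 0) := FloorSemiring.tendsto_pow_div_factorial_atTop _
    have h1 := ((h0.const_mul D).const_add (a * Real.exp (b * (x1 - x0))))
    simp only [mul_zero, add_zero] at h1
    simp only [mul_div_assoc]
    exact h1
  exact ge_of_tendsto' hlim hmb

noncomputable def sker (k : ℂ) (y t : ℝ) : ℂ :=
  (Complex.exp (2 * Complex.I * k * (↑t - ↑y)) - 1) / (2 * Complex.I * k)

lemma sker_cont (k : ℂ) (y : ℝ) : Continuous (fun t => sker k y t) := by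
  unfold sker
  fun_prop

lemma sker_eq_zero_iff {k : ℂ} (hk : k ≠ 0) (y t : ℝ) :
    sker k y t = 0 ↔ ∃ m : ℤ, k * (↑t - ↑y) = m * Real.pi := by
  have h2 : (2 : ℂ) * Complex.I * k ≠ 0 := by
    simp [Complex.I_ne_zero, hk]
  have h2' : (2 : ℂ) * Complex.I ≠ 0 := by simp [Complex.I_ne_zero]
  rw [sker, div_eq_zero_iff]
  simp only [h2, or_false, sub_eq_zero]
  rw [Complex.exp_eq_one_iff]
  constructor
  · rintro ⟨m, hm⟩
    refine ⟨m, mul_left_cancel₀ h2' ?_⟩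
    linear_combination hm
  · rintro ⟨m, hm⟩
    exact ⟨m, by linear_combination (2 : ℂ) * Complex.I * hm⟩

lemma sker_zero_null {k : ℂ} (hk : k ≠ 0) (y : ℝ) :
    volume {t : ℝ | sker k y t = 0} = 0 := by
  have hsub : {t : ℝ | sker k y t = 0} ⊆
      ⋃ m : ℤ, {t : ℝ | k * (↑t - ↑y) = m * Real.pi} := by
    intro t ht
    rw [Set.mem_setOf_eq, sker_eq_zero_iff hk] at ht
    obtain ⟨m, hm⟩ := ht
    exact Set.mem_iUnion.2 ⟨m, hm⟩
  have hcnt : Set.Countable (⋃ m : ℤ, {t : ℝ | k * (↑t - ↑y) = m * Real.pi}) := by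
    apply Set.countable_iUnion
    intro m
    apply Set.Subsingleton.countable
    intro t1 h1 t2 h2
    simp only [Set.mem_setOf_eq] at h1 h2
    have : k * (↑t1 - ↑y) = k * (↑t2 - ↑y) := h1.trans h2.symm
    have := mul_left_cancel₀ hk this
    have : (t1 : ℂ) = t2 := by linear_combination this
    exact_mod_cast this
  exact measure_mono_null hsub (hcnt.measure_zero volume)

lemma sker_abs_le {k : ℂ} (him : 0 ≤ k.im) (habs : 1 ≤ ‖k‖) {y t : ℝ} (hyt : y ≤ t) :
    ‖sker k y t‖ ≤ (‖k‖)⁻¹ := by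
  have hk0 : (0:ℝ) < ‖k‖ := lt_of_lt_of_le one_pos habs
  have hre : (2 * Complex.I * k * (↑t - ↑y)).re ≤ 0 := by
    have : ((t:ℂ) - (y:ℂ)) = ((t - y : ℝ) : ℂ) := by push_cast; ring
    rw [this]
    simp [Complex.mul_re, Complex.ofReal_re, Complex.ofReal_im, Complex.I_re, Complex.I_im]
    nlinarith [sub_nonneg.2 hyt, him]
  have hnum : ‖Complex.exp (2 * Complex.I * k * (↑t - ↑y)) - 1‖ ≤ 2 := by
    rw [sub_eq_add_neg]
    refine (norm_add_le _ _).trans ?_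
    rw [Complex.norm_exp]
    simp only [norm_neg]
    have h1 : ‖(1:ℂ)‖ = 1 := norm_one
    have := Real.exp_le_one_iff.2 hre
    linarith
  rw [sker, norm_div]
  have hden : ‖2 * Complex.I * k‖ = 2 * ‖k‖ := by
    simp [norm_mul]
  rw [hden]
  rw [div_le_iff₀ (by positivity)]
  have : (‖k‖)⁻¹ * (2 * ‖k‖) = 2 := by field_simp
  rw [this]
  exact hnum

end Helpers

/-- Let `V` be a smooth compactly supported Hermitian matrix potential
(vanishing outside `[xmin, xmax]`), and let `H(x,k)` solve the Volterra
equation `H(x,k) = ∫_x^∞ K(x,t,k) dt + ∫_x^∞ K(x,t,k) H(t,k) dt` with kernel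
`K(x,t,k) = ((e^{2ik(t-x)} - 1)/(2ik)) V(t)`. Then there is a constant `C`
(depending on `V`, `n`) with `‖H(x,k)‖ ≤ C (1+|k|)⁻¹` for all
`xmin ≤ x ≤ xmax` and all `k` with `Im k ≥ 0`, `|k| ≥ 1`. -/
theorem stmt11 {n : ℕ} (V : ℝ → Matrix (Fin n) (Fin n) ℂ)
    (xmin xmax : ℝ) (hx : xmin ≤ xmax)
    (hVsm : ∀ i j, ContDiff ℝ (⊤ : ℕ∞) fun x => V x i j)
    (hVsupp : ∀ x, x < xmin ∨ xmax < x → V x = 0)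
    (hVherm : ∀ x, (V x).IsHermitian)
    (H : ℝ → ℂ → Matrix (Fin n) (Fin n) ℂ)
    (hH : ∀ (x : ℝ) (k : ℂ), 0 ≤ k.im → 1 ≤ ‖k‖ →
      H x k =
        (∫ t in Set.Ioi x,
          ((Complex.exp (2 * Complex.I * k * (t - x)) - 1) / (2 * Complex.I * k)) • V t) +
        ∫ t in Set.Ioi x,
          (((Complex.exp (2 * Complex.I * k * (t - x)) - 1) / (2 * Complex.I * k)) • V t)
            * H t k) :
    ∃ C : ℝ, ∀ (x : ℝ) (k : ℂ), xmin ≤ x → x ≤ xmax → 0 ≤ k.im →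
      1 ≤ ‖k‖ → ‖H x k‖ ≤ C * (1 + ‖k‖)⁻¹ := by
  classical
  have hVcont : Continuous V := continuous_matrix (fun i j => (hVsm i j).continuous)
  obtain ⟨M, hM0, hMb⟩ : ∃ M, 0 ≤ M ∧ ∀ t, ‖V t‖ ≤ M := by
    obtain ⟨M0, hM0⟩ := (isCompact_Icc (a := xmin) (b := xmax)).exists_bound_of_continuousOn
      hVcont.continuousOn
    refine ⟨max M0 0, le_max_right _ _, fun t => ?_⟩
    by_cases htt : t ∈ Set.Icc xmin xmax
    · exact (hM0 t htt).trans (le_max_left _ _)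
    · have : V t = 0 := by
        apply hVsupp
        simp only [Set.mem_Icc, not_and_or, not_le] at htt
        exact htt
      simp [this, le_max_right]
  set L := xmax - xmin with hLdef
  have hL0 : 0 ≤ L := by rw [hLdef]; linarith
  set C0 := M * L + M * M * L * L * Real.exp (M * L) with hC0def
  have hC00 : 0 ≤ C0 := by positivity
  have hMLC0 : M * L ≤ C0 := by
    have h1 : 0 ≤ M * M * L * L * Real.exp (M * L) := by positivity
    rw [hC0def]; linarith
  refine ⟨2 * C0, ?_⟩
  suffices key : ∀ k : ℂ, 0 ≤ k.im → 1 ≤ ‖k‖ → ∀ x, xmin ≤ x → x ≤ xmax →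
      ‖H x k‖ ≤ (‖k‖)⁻¹ * C0 by
    intro x k h1 h2 h3 h4
    have hA : (1:ℝ) ≤ ‖k‖ := h4
    have hbd := key k h3 h4 x h1 h2
    have hc2 : (‖k‖)⁻¹ ≤ 2 * (1 + ‖k‖)⁻¹ := by
      rw [inv_eq_one_div, inv_eq_one_div, mul_one_div, div_le_div_iff₀ (by linarith) (by linarith)]
      linarith
    calc ‖H x k‖ ≤ (‖k‖)⁻¹ * C0 := hbd
      _ ≤ (2 * (1 + ‖k‖)⁻¹) * C0 := mul_le_mul_of_nonneg_right hc2 hC00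
      _ = 2 * C0 * (1 + ‖k‖)⁻¹ := by ring
  intro k him habs
  have hk0 : k ≠ 0 := by
    intro h; rw [h] at habs; simp at habs; linarith
  have hA1 : (1:ℝ) ≤ ‖k‖ := habs
  have hApos : (0:ℝ) < ‖k‖ := by linarith
  set c := (‖k‖)⁻¹ with hcdef
  have hc0 : 0 < c := by positivity
  have hc1 : c ≤ 1 := by
    rw [hcdef]
    exact inv_le_one_of_one_le₀ habs
  -- q and ψ
  set q : ℝ → Matrix (Fin n) (Fin n) ℂ := fun t => V t * H t k with hqdef
  set ψ : ℝ → ℝ := fun t => ‖q t‖ with hψdef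
  have hψnn : ∀ t, 0 ≤ ψ t := fun t => norm_nonneg _
  have hq0 : ∀ u : ℝ, xmax < u → q u = 0 := by
    intro u hu
    simp [hqdef, hVsupp u (Or.inr hu)]
  have hψM : ∀ t, ψ t ≤ M * ‖H t k‖ := by
    intro t
    calc ψ t = ‖V t * H t k‖ := rfl
      _ ≤ ‖V t‖ * ‖H t k‖ := norm_mul_le _ _
      _ ≤ M * ‖H t k‖ := mul_le_mul_of_nonneg_right (hMb t) (norm_nonneg _)
  -- the fixed point equation, rewritten
  have heq : ∀ y : ℝ, H y k = (∫ t in Set.Ioi y, sker k y t • V t) +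
      ∫ t in Set.Ioi y, sker k y t • q t := by
    intro y
    have h := hH y k him habs
    simp only [smul_mul_assoc] at h
    exact h
  -- bound on the inhomogeneous term
  have hgb : ∀ y ∈ Set.Icc xmin xmax, ‖∫ t in Set.Ioi y, sker k y t • V t‖ ≤ c * (M * L) := by
    intro y hy
    have h1 : ‖∫ t in Set.Ioi y, sker k y t • V t‖ ≤ ∫ t in Set.Ioi y, ‖sker k y t • V t‖ :=
      norm_integral_le_integral_norm _
    have hindint : Integrable ((Set.Ioc y xmax).indicator (fun _ => c * M))
        (volume.restrict (Set.Ioi y)) := by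
      apply Integrable.restrict
      rw [integrable_indicator_iff measurableSet_Ioc]
      exact integrableOn_const (by rw [Real.volume_Ioc]; exact ENNReal.ofReal_ne_top)
    have h2 : ∫ t in Set.Ioi y, ‖sker k y t • V t‖ ≤
        ∫ t in Set.Ioi y, (Set.Ioc y xmax).indicator (fun _ => c * M) t := by
      apply integral_mono_of_nonneg
      · filter_upwards with t using norm_nonneg _
      · exact hindint
      · filter_upwards [ae_restrict_mem measurableSet_Ioi] with t ht
        by_cases hle : t ≤ xmax
        · rw [Set.indicator_of_mem (Set.mem_Ioc.mpr ⟨ht, hle⟩)]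
          rw [norm_smul]
          have hs := sker_abs_le him habs (le_of_lt ht)
          exact mul_le_mul hs (hMb t) (norm_nonneg _) hc0.le
        · rw [Set.indicator_of_notMem (fun hmem => hle (Set.mem_Ioc.mp hmem).2),
            hVsupp t (Or.inr (lt_of_not_ge hle)), smul_zero, norm_zero]
    have h3 : ∫ t in Set.Ioi y, (Set.Ioc y xmax).indicator (fun _ => c * M) t
        = (xmax - y) * (c * M) := by
      rw [setIntegral_indicator measurableSet_Ioc,
        Set.inter_eq_self_of_subset_right Set.Ioc_subset_Ioi_self, setIntegral_const,
        measureReal_def, Real.volume_Ioc, ENNReal.toReal_ofReal (by linarith [hy.2]), smul_eq_mul]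
    have h4 : (xmax - y) * (c * M) ≤ c * (M * L) := by
      have : xmax - y ≤ L := by rw [hLdef]; linarith [hy.1]
      nlinarith [mul_nonneg hc0.le hM0, hy.2]
    linarith
  -- bound on the integral term given integrability of ψ
  have hIb : ∀ y ∈ Set.Icc xmin xmax, IntegrableOn ψ (Set.Ioc y xmax) →
      ‖∫ t in Set.Ioi y, sker k y t • q t‖ ≤ c * ∫ u in Set.Ioc y xmax, ψ u := by
    intro y hy hint
    have h1 : ‖∫ t in Set.Ioi y, sker k y t • q t‖ ≤ ∫ t in Set.Ioi y, ‖sker k y t • q t‖ :=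
      norm_integral_le_integral_norm _
    have hindint : Integrable ((Set.Ioc y xmax).indicator ψ) (volume.restrict (Set.Ioi y)) := by
      apply Integrable.restrict
      rw [integrable_indicator_iff measurableSet_Ioc]
      exact hint
    have h2 : ∫ t in Set.Ioi y, ‖sker k y t • q t‖ ≤
        ∫ t in Set.Ioi y, c * (Set.Ioc y xmax).indicator ψ t := by
      apply integral_mono_of_nonneg
      · filter_upwards with t using norm_nonneg _
      · exact hindint.const_mul c
      · filter_upwards [ae_restrict_mem measurableSet_Ioi] with t ht
        by_cases hle : t ≤ xmax
        · rw [Set.indicator_of_mem (Set.mem_Ioc.mpr ⟨ht, hle⟩), norm_smul]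
          exact mul_le_mul_of_nonneg_right (sker_abs_le him habs (le_of_lt ht)) (hψnn t)
        · rw [Set.indicator_of_notMem (fun hmem => hle (Set.mem_Ioc.mp hmem).2), mul_zero,
            hq0 t (lt_of_not_ge hle), smul_zero, norm_zero]
    have h3 : ∫ t in Set.Ioi y, c * (Set.Ioc y xmax).indicator ψ t
        = c * ∫ u in Set.Ioc y xmax, ψ u := by
      rw [integral_const_mul, setIntegral_indicator measurableSet_Ioc,
        Set.inter_eq_self_of_subset_right Set.Ioc_subset_Ioi_self]
    linarith
  have hfb : ∀ y ∈ Set.Icc xmin xmax, IntegrableOn ψ (Set.Ioc y xmax) →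
      ‖H y k‖ ≤ c * (M * L) + c * ∫ u in Set.Ioc y xmax, ψ u := by
    intro y hy hint
    rw [heq y]
    exact (norm_add_le _ _).trans (add_le_add (hgb y hy) (hIb y hy hint))
  -- Lemma A: the Gronwall bound
  have lemA : ∀ y ∈ Set.Icc xmin xmax, IntegrableOn ψ (Set.Ioc y xmax) →
      ‖H y k‖ ≤ c * C0 := by
    intro y hy hint
    have hgr : ∀ t ∈ Set.Ioc y xmax, ψ t ≤ c * M * M * L + (c * M) * ∫ u in Set.Ioc t xmax, ψ u := by
      intro t ht
      have ht' : t ∈ Set.Icc xmin xmax := ⟨hy.1.trans ht.1.le, ht.2⟩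
      have h1 := hfb t ht' (hint.mono_set (Set.Ioc_subset_Ioc_left ht.1.le))
      have h2 := hψM t
      nlinarith [mul_le_mul_of_nonneg_left h1 hM0]
    have hgrw := gronwall_aux y xmax (c * M * M * L) (c * M) ψ (by positivity) (by positivity)
      hint (fun t _ => hψnn t) hgr
    have hexp : ∀ t ∈ Set.Ioc y xmax, ψ t ≤ c * M * M * L * Real.exp (M * L) := by
      intro t ht
      refine (hgrw t ht).trans ?_
      have harg : c * M * (xmax - y) ≤ M * L := by
        have h5 : xmax - y ≤ L := by rw [hLdef]; linarith [hy.1]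
        have h6 : 0 ≤ xmax - y := by linarith [hy.2]
        calc c * M * (xmax - y) = c * (M * (xmax - y)) := by ring
          _ ≤ 1 * (M * (xmax - y)) := mul_le_mul_of_nonneg_right hc1 (mul_nonneg hM0 h6)
          _ = M * (xmax - y) := one_mul _
          _ ≤ M * L := mul_le_mul_of_nonneg_left h5 hM0
      have h7 := Real.exp_le_exp.2 harg
      have h8 : 0 ≤ c * M * M * L := by positivity
      nlinarith [Real.exp_pos (c * M * (xmax - y))]
    have hintle : (∫ u in Set.Ioc y xmax, ψ u) ≤
        (xmax - y) * (c * M * M * L * Real.exp (M * L)) := by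
      have h7 : (∫ u in Set.Ioc y xmax, ψ u) ≤
          ∫ _u in Set.Ioc y xmax, c * M * M * L * Real.exp (M * L) := by
        apply setIntegral_mono_on hint (integrableOn_const (by
          rw [Real.volume_Ioc]; exact ENNReal.ofReal_ne_top)) measurableSet_Ioc
        exact hexp
      rwa [setIntegral_const, measureReal_def, Real.volume_Ioc, ENNReal.toReal_ofReal (by linarith [hy.2]),
        smul_eq_mul] at h7
    have h8 := hfb y hy hint
    have h9 : xmax - y ≤ L := by rw [hLdef]; linarith [hy.1]
    have e1 : c * (∫ u in Set.Ioc y xmax, ψ u) ≤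
        c * ((xmax - y) * (c * M * M * L * Real.exp (M * L))) :=
      mul_le_mul_of_nonneg_left hintle hc0.le
    have e2 : c * ((xmax - y) * (c * M * M * L * Real.exp (M * L))) ≤
        c * (L * (c * M * M * L * Real.exp (M * L))) :=
      mul_le_mul_of_nonneg_left (mul_le_mul_of_nonneg_right h9 (by positivity)) hc0.le
    have e3 : c * (L * (c * M * M * L * Real.exp (M * L)))
        = (c * c) * (M * M * L * L * Real.exp (M * L)) := by ring
    have e4 : c * c ≤ c := by nlinarith [hc1, hc0.le]
    have e5 : (c * c) * (M * M * L * L * Real.exp (M * L)) ≤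
        c * (M * M * L * L * Real.exp (M * L)) :=
      mul_le_mul_of_nonneg_right e4 (by positivity)
    rw [hC0def, mul_add]
    linarith
  -- If the Volterra integrand is not integrable, H y k is just the inhomogeneous term
  have hnotD : ∀ y ∈ Set.Icc xmin xmax, ¬ IntegrableOn (fun t => sker k y t • q t) (Set.Ioi y) →
      ‖H y k‖ ≤ c * (M * L) := by
    intro y hy hni
    have h := heq y
    rw [integral_undef hni, add_zero] at h
    rw [h]
    exact hgb y hy
  -- measurability of q from integrability of the kernel-weighted version
  have hae : ∀ y : ℝ, ∀ᵐ t ∂(volume.restrict (Set.Ioi y)), sker k y t ≠ 0 := by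
    intro y
    apply ae_restrict_of_ae
    rw [ae_iff]
    simpa using sker_zero_null hk0 y
  have hq_meas : ∀ y : ℝ, IntegrableOn (fun t => sker k y t • q t) (Set.Ioi y) →
      AEStronglyMeasurable q (volume.restrict (Set.Ioi y)) := by
    intro y hin
    have h1 : AEStronglyMeasurable (fun t => sker k y t • q t) (volume.restrict (Set.Ioi y)) :=
      hin.aestronglyMeasurable
    have h2 : AEStronglyMeasurable (fun t => (sker k y t)⁻¹) (volume.restrict (Set.Ioi y)) :=
      ((sker_cont k y).measurable.inv).aestronglyMeasurable
    have h3 := h2.smul h1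
    apply h3.congr
    filter_upwards [hae y] with t ht
    simp [smul_smul, inv_mul_cancel₀ ht]
  -- Lemma B ingredients
  have hDQ : ∀ y ∈ Set.Icc xmin xmax, ∀ u ∈ Set.Ioc y xmax, sker k y u ≠ 0 →
      IntegrableOn (fun t => sker k y t • q t) (Set.Ioi y) →
      IntegrableOn (fun t => sker k u t • q t) (Set.Ioi u) →
      IntegrableOn ψ (Set.Ioc u xmax) := by
    intro y hy u hu hsne hFy hFu
    have huy : y < u := hu.1
    have hum : u ≤ xmax := hu.2
    have hφcont : ContinuousOn (fun w => ‖sker k y w‖ + ‖sker k u w‖)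
        (Set.Icc u xmax) :=
      ((continuous_norm.comp (sker_cont k y)).add
        (continuous_norm.comp (sker_cont k u))).continuousOn
    obtain ⟨w0, hw0mem, hw0min⟩ := isCompact_Icc.exists_isMinOn
      ⟨u, Set.mem_Icc.mpr ⟨le_refl u, hum⟩⟩ hφcont
    set δ := ‖sker k y w0‖ + ‖sker k u w0‖ with hδdef
    have hδnn : 0 ≤ δ := by positivity
    have hδpos : 0 < δ := by
      rcases lt_or_eq_of_le hδnn with h | h
      · exact h
      exfalso
      have hy0 : sker k y w0 = 0 := by
        have h1 : ‖sker k y w0‖ = 0 := by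
          have := norm_nonneg (sker k y w0)
          have := norm_nonneg (sker k u w0)
          rw [hδdef] at h; linarith
        exact norm_eq_zero.mp h1
      have hu0 : sker k u w0 = 0 := by
        have h1 : ‖sker k u w0‖ = 0 := by
          have := norm_nonneg (sker k y w0)
          have := norm_nonneg (sker k u w0)
          rw [hδdef] at h; linarith
        exact norm_eq_zero.mp h1
      obtain ⟨m, hm⟩ := (sker_eq_zero_iff hk0 y w0).mp hy0
      obtain ⟨m', hm'⟩ := (sker_eq_zero_iff hk0 u w0).mp hu0
      apply hsne
      apply (sker_eq_zero_iff hk0 y u).mpr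
      refine ⟨m - m', ?_⟩
      push_cast
      linear_combination hm - hm'
    have hψmeas : AEStronglyMeasurable ψ (volume.restrict (Set.Ioc u xmax)) :=
      ((hq_meas u hFu).norm).mono_measure (Measure.restrict_mono Set.Ioc_subset_Ioi_self le_rfl)
    have hsub1 : Set.Ioc u xmax ⊆ Set.Ioi y := fun w hw => lt_trans huy hw.1
    have hsub2 : Set.Ioc u xmax ⊆ Set.Ioi u := Set.Ioc_subset_Ioi_self
    apply Integrable.mono'
      (g := fun w => δ⁻¹ * (‖sker k y w • q w‖ + ‖sker k u w • q w‖))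
      ((((hFy.mono_set hsub1).norm).add ((hFu.mono_set hsub2).norm)).const_mul δ⁻¹) hψmeas
    filter_upwards [ae_restrict_mem measurableSet_Ioc] with w hw
    have hwIcc : w ∈ Set.Icc u xmax := ⟨hw.1.le, hw.2⟩
    have hφw : δ ≤ ‖sker k y w‖ + ‖sker k u w‖ :=
      isMinOn_iff.mp hw0min w hwIcc
    have h1 : ‖ψ w‖ = ψ w := by rw [Real.norm_eq_abs, abs_of_nonneg (hψnn w)]
    rw [h1]
    have h2 : ψ w = δ⁻¹ * (δ * ψ w) := by rw [← mul_assoc, inv_mul_cancel₀ (ne_of_gt hδpos), one_mul]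
    rw [h2]
    apply mul_le_mul_of_nonneg_left _ (inv_nonneg.mpr hδnn)
    calc δ * ψ w ≤ (‖sker k y w‖ + ‖sker k u w‖) * ψ w :=
          mul_le_mul_of_nonneg_right hφw (hψnn w)
      _ = ‖sker k y w • q w‖ + ‖sker k u w • q w‖ := by
          simp only [norm_smul, add_mul, hψdef]
  have lemB : ∀ y ∈ Set.Icc xmin xmax, IntegrableOn (fun t => sker k y t • q t) (Set.Ioi y) →
      IntegrableOn ψ (Set.Ioc y xmax) := by
    intro y hy hFy
    have hψmeas : AEStronglyMeasurable ψ (volume.restrict (Set.Ioc y xmax)) :=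
      ((hq_meas y hFy).norm).mono_measure (Measure.restrict_mono Set.Ioc_subset_Ioi_self le_rfl)
    have hzero : ∀ᵐ w ∂(volume.restrict (Set.Ioc y xmax)), sker k y w ≠ 0 := by
      apply ae_restrict_of_ae
      rw [ae_iff]
      simpa using sker_zero_null hk0 y
    apply Integrable.mono' (g := fun _ => M * (c * C0))
      ((integrableOn_const (by rw [Real.volume_Ioc]; exact ENNReal.ofReal_ne_top)) :
        IntegrableOn _ (Set.Ioc y xmax) volume) hψmeas
    filter_upwards [ae_restrict_mem measurableSet_Ioc, hzero] with w hw hwne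
    have hw' : w ∈ Set.Icc xmin xmax := ⟨hy.1.trans hw.1.le, hw.2⟩
    have hbnd : ‖H w k‖ ≤ c * C0 := by
      by_cases hD : IntegrableOn (fun t => sker k w t • q t) (Set.Ioi w)
      · exact lemA w hw' (hDQ y hy w hw hwne hFy hD)
      · exact (hnotD w hw' hD).trans (mul_le_mul_of_nonneg_left hMLC0 hc0.le)
    have h1 : ‖ψ w‖ = ψ w := by rw [Real.norm_eq_abs, abs_of_nonneg (hψnn w)]
    rw [h1]
    exact (hψM w).trans (mul_le_mul_of_nonneg_left hbnd hM0)
  -- conclusion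
  intro x hx1 hx2
  by_cases hD : IntegrableOn (fun t => sker k x t • q t) (Set.Ioi x)
  · exact lemA x ⟨hx1, hx2⟩ (lemB x ⟨hx1, hx2⟩ hD)
  · calc ‖H x k‖ ≤ c * (M * L) := hnotD x ⟨hx1, hx2⟩ hD
      _ ≤ c * C0 := mul_le_mul_of_nonneg_left hMLC0 hc0.le
end

section
/- Let W be a Hermitian n×n matrix and W_- its negative part. For any monotone argument: if -μ_j < 0 are the negative eigenvalues of W, then for γ > 3/2, ∫_0^∞ t^{γ-5/2} tr(((W + t·1)_-)²) dt = B(γ - 3/2, 3) · Σ_j μ_j^{γ+1/2} = B(γ - 3/2, 3) · tr(W_-^{γ+1/2}). -/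
/-!
Shifting `W` by `t ≥ 0` shifts each negative part `μ = (λ)_-` to `(μ - t)_+`, so the trace
splits into one integral per eigenvalue, `∫₀^μ t^(a-1) (μ - t)² dt` with `a = γ - 3/2`.
Expanding the square and integrating the three powers gives `μ^(a+2) · 2 / (a (a+1) (a+2))`,
which is `B(a, 3) μ^(a+2)` by the functional equation of `Γ`.
-/

open MeasureTheory Set

lemma betaF_three {a : ℝ} (ha : 0 < a) : betaF a 3 = 2 / (a * (a + 1) * (a + 2)) := by
  have hΓ3 : Real.Gamma 3 = 2 := by simp
  have hΓ : Real.Gamma (a + 3) = (a + 2) * (a + 1) * a * Real.Gamma a := by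
    rw [show a + 3 = a + 2 + 1 by ring, Real.Gamma_add_one (by positivity),
      show a + 2 = a + 1 + 1 by ring, Real.Gamma_add_one (by positivity),
      Real.Gamma_add_one ha.ne']
    ring
  rw [betaF, hΓ3, hΓ]
  field_simp [(Real.Gamma_pos_of_pos ha).ne']

lemma max_neg_add_zero_eq {α : Type*} [AddCommGroup α] [LinearOrder α] [IsOrderedAddMonoid α]
    (l : α) {t : α} (ht : 0 ≤ t) : max (-(l + t)) 0 = max (max (-l) 0 - t) 0 := by
  rw [← max_sub_sub_right, zero_sub, max_assoc, max_eq_right (neg_nonpos.2 ht), neg_add']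

lemma intervalIntegral_rpow_mul_sub_sq {a μ : ℝ} (ha : 0 < a) (hμ : 0 ≤ μ) :
    ∫ t in (0 : ℝ)..μ, t ^ (a - 1) * (μ - t) ^ 2
      = 2 / (a * (a + 1) * (a + 2)) * μ ^ (a + 2) := by
  have expand : ∀ t ∈ uIcc 0 μ,
      t ^ (a - 1) * (μ - t) ^ 2 = μ ^ 2 * t ^ (a - 1) - 2 * μ * t ^ a + t ^ (a + 1) := by
    intro t ht
    have ht0 : 0 ≤ t := by rw [uIcc_of_le hμ] at ht; exact ht.1
    have hpow : t ^ a = t ^ (a - 1) * t := by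
      simpa using Real.rpow_add_one' ht0 (show a - 1 + 1 ≠ 0 by linarith)
    rw [Real.rpow_add_one' ht0 (by linarith), hpow]
    ring
  have hμ1 : μ ^ (a + 1) = μ ^ a * μ := Real.rpow_add_one' hμ (by linarith)
  have hμ2 : μ ^ (a + 2) = μ ^ a * μ * μ := by
    rw [show a + 2 = a + 1 + 1 by ring, Real.rpow_add_one' hμ (by linarith), hμ1]
  have hint : ∀ {r : ℝ}, -1 < r → IntervalIntegrable (fun t : ℝ => t ^ r) volume 0 μ :=
    intervalIntegral.intervalIntegrable_rpow'
  have I1 := (hint (r := a - 1) (by linarith)).const_mul (μ ^ 2)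
  have I2 := (hint (r := a) (by linarith)).const_mul (2 * μ)
  rw [intervalIntegral.integral_congr expand,
    intervalIntegral.integral_add (I1.sub I2) (hint (by linarith)),
    intervalIntegral.integral_sub I1 I2, intervalIntegral.integral_const_mul,
    intervalIntegral.integral_const_mul, integral_rpow (Or.inl (by linarith)),
    integral_rpow (Or.inl (by linarith)), integral_rpow (Or.inl (by linarith)), sub_add_cancel,
    Real.zero_rpow ha.ne', Real.zero_rpow (by linarith), Real.zero_rpow (by linarith),
    show a + 1 + 1 = a + 2 by ring, hμ2, hμ1]
  field_simp
  ring

section Truncated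

variable {a μ : ℝ}

lemma rpow_mul_max_sub_sq_eq_zero_of_lt {t : ℝ} (ht : μ < t) :
    t ^ (a - 1) * max (μ - t) 0 ^ 2 = 0 := by
  rw [max_eq_right (by linarith)]
  ring

lemma eqOn_rpow_mul_max_sub_sq :
    EqOn (fun t : ℝ => t ^ (a - 1) * max (μ - t) 0 ^ 2) (fun t => t ^ (a - 1) * (μ - t) ^ 2)
      (Ioc 0 μ) := fun t ht => by
  simp only [max_eq_left (sub_nonneg.2 ht.2)]

lemma integrableOn_Ioi_rpow_mul_max_sub_sq (ha : 0 < a) :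
    IntegrableOn (fun t : ℝ => t ^ (a - 1) * max (μ - t) 0 ^ 2) (Ioi 0) := by
  have hIoc : IntegrableOn (fun t : ℝ => t ^ (a - 1) * (μ - t) ^ 2) (Ioc 0 μ) :=
    ((intervalIntegral.intervalIntegrable_rpow' (by linarith)).mul_continuousOn
      (g := fun t => (μ - t) ^ 2) (by fun_prop)).1
  exact (hIoc.congr_fun eqOn_rpow_mul_max_sub_sq.symm measurableSet_Ioc).of_forall_sdiff_eq_zero
    measurableSet_Ioi fun t ht =>
      rpow_mul_max_sub_sq_eq_zero_of_lt (not_le.1 fun h => ht.2 ⟨ht.1, h⟩)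

lemma integral_Ioi_rpow_mul_max_sub_sq (ha : 0 < a) (hμ : 0 ≤ μ) :
    ∫ t in Ioi 0, t ^ (a - 1) * max (μ - t) 0 ^ 2 = betaF a 3 * μ ^ (a + 2) := by
  rw [setIntegral_eq_of_subset_of_forall_sdiff_eq_zero measurableSet_Ioi Ioc_subset_Ioi_self
      fun t ht => rpow_mul_max_sub_sq_eq_zero_of_lt (not_le.1 fun h => ht.2 ⟨ht.1, h⟩),
    setIntegral_congr_fun measurableSet_Ioc eqOn_rpow_mul_max_sub_sq,
    ← intervalIntegral.integral_of_le hμ, intervalIntegral_rpow_mul_sub_sq ha hμ,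
    betaF_three ha]

end Truncated

/-- For a Hermitian matrix `W` with negative eigenvalues `-μ_j` and `γ > 3/2`,
`∫_0^∞ t^{γ-5/2} tr((W+t)_-²) dt = B(γ-3/2,3) Σ_j μ_j^{γ+1/2} = B(γ-3/2,3) tr(W_-^{γ+1/2})`,
where `tr((W+t)_-²) = Σ_j ((λ_j + t)_-)²` over the eigenvalues `λ_j` of `W`. -/
theorem stmt13 {n : ℕ} (W : Matrix (Fin n) (Fin n) ℂ) (hW : W.IsHermitian)
    (γ : ℝ) (hγ : 3 / 2 < γ) :
    ∫ t in Set.Ioi (0 : ℝ),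
        t ^ (γ - 5 / 2) * ∑ j, (max (-(hW.eigenvalues j + t)) 0) ^ 2
      = betaF (γ - 3 / 2) 3 * ∑ j, (max (-(hW.eigenvalues j)) 0) ^ (γ + 1 / 2) := by
  have ha : 0 < γ - 3 / 2 := by linarith
  have hμ : ∀ j, 0 ≤ max (-hW.eigenvalues j) 0 := fun j => le_max_right _ _
  have per_eigenvalue : ∀ t ∈ Ioi (0 : ℝ),
      t ^ (γ - 5 / 2) * ∑ j, max (-(hW.eigenvalues j + t)) 0 ^ 2
        = ∑ j, t ^ (γ - 3 / 2 - 1) * max (max (-hW.eigenvalues j) 0 - t) 0 ^ 2 := by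
    intro t ht
    rw [show γ - 3 / 2 - 1 = γ - 5 / 2 by ring, Finset.mul_sum]
    simp only [max_neg_add_zero_eq _ (mem_Ioi.1 ht).le]
  rw [setIntegral_congr_fun measurableSet_Ioi per_eigenvalue,
    integral_finsetSum _ fun j _ => integrableOn_Ioi_rpow_mul_max_sub_sq ha,
    Finset.mul_sum]
  refine Finset.sum_congr rfl fun j _ => ?_
  rw [integral_Ioi_rpow_mul_max_sub_sq ha (hμ j), show γ + 1 / 2 = γ - 3 / 2 + 2 by ring]
end
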